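/- arXiv:1808.10317 — 8 statements merged into one kernel-verified Lean document; each statement's English description precedes it below -/
import Mathlib

section
/- Let (S; ≤, *, 1) be a tomonoid and define the level equivalence ~ on S × S by (a,b) ~ (c,d) iff a*b = c*d. Then ~ is regular for the componentwise order ⊴ on S²: for any elements c₀, …, c_k of S² with c₀ ~ c₁ ⊴ c₂ ~ c₃ ⊴ … ⊴ c_k ~ c₀, all of c₀, …, c_k are ~-equivalent. -/
/-- The level equivalence of a tomonoid is regular for the
componentwise order: a closed alternating chain
`c₀ ~ c₁ ⊴ c₂ ~ c₃ ⊴ … ⊴ c_k ~ c₀` forces all members to be `~`-equivalent. -/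
theorem level_equivalence_regular
    {S : Type*} [LinearOrder S] [Monoid S]
    (hcomp : ∀ a b c : S, a ≤ b → a * c ≤ b * c ∧ c * a ≤ c * b) :
    ∀ (k : ℕ) (c : ℕ → S × S),
      (∀ i < k, (Even i → (c i).1 * (c i).2 = (c (i + 1)).1 * (c (i + 1)).2) ∧
                (¬ Even i → (c i).1 ≤ (c (i + 1)).1 ∧ (c i).2 ≤ (c (i + 1)).2)) →
      (c k).1 * (c k).2 = (c 0).1 * (c 0).2 →
      ∀ i ≤ k, ∀ j ≤ k, (c i).1 * (c i).2 = (c j).1 * (c j).2 := by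
  intro k c hchain hclose
  -- the product is monotone along the chain
  have step : ∀ i < k, (c i).1 * (c i).2 ≤ (c (i + 1)).1 * (c (i + 1)).2 := by
    intro i hi
    by_cases he : Even i
    · exact le_of_eq ((hchain i hi).1 he)
    · obtain ⟨h1, h2⟩ := (hchain i hi).2 he
      exact le_trans (hcomp _ _ _ h1).1 (hcomp _ _ _ h2).2
  have mono : ∀ i j, i ≤ j → j ≤ k → (c i).1 * (c i).2 ≤ (c j).1 * (c j).2 := by
    intro i j hij hjk
    induction j with
    | zero => simp_all
    | succ n ih =>
      rcases Nat.lt_or_ge i (n + 1) with h | h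
      · exact le_trans (ih (Nat.lt_succ_iff.mp h) (le_trans (Nat.le_succ n) hjk))
          (step n (Nat.lt_of_lt_of_le (Nat.lt_succ_self n) hjk))
      · have : i = n + 1 := le_antisymm hij h
        simp [this]
  have const : ∀ i ≤ k, (c i).1 * (c i).2 = (c 0).1 * (c 0).2 := by
    intro i hik
    exact le_antisymm (hclose ▸ mono i k hik le_rfl) (mono 0 i (Nat.zero_le i) hik)
  intro i hi j hj
  rw [const i hi, const j hj]
end

section
/- Let (S; ≤) be a chain with designated element 1 and ~ an equivalence on S² satisfying: (P1) ~ is regular for the componentwise order ⊴; (P2) for each (a,b) ∈ S² there is exactly one c with (a,b) ~ (1,c) ~ (c,1); (P3) (a,b) ~ (d,1) and (b,c) ~ (1,e) imply (d,c) ~ (a,e). Define a*b as the unique c with (a,b) ~ (1,c). Then (S; ≤, *, 1) is a tomonoid whose level equivalence is ~, and it is the unique tomonoid with this property. -/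
/-- From a tomonoid partition, i.e. an equivalence relation `r`
on `S²` satisfying (P1), (P2), (P3), one recovers a unique tomonoid structure
whose level equivalence is `r`. -/
theorem tomonoid_from_partition_unique
    {S : Type*} [LinearOrder S] (one : S)
    (r : S × S → S × S → Prop) (hr : Equivalence r)
    (hP1 : ∀ (k : ℕ) (c : ℕ → S × S),
        (∀ i < k, (Even i → r (c i) (c (i + 1))) ∧
                  (¬ Even i → (c i).1 ≤ (c (i + 1)).1 ∧ (c i).2 ≤ (c (i + 1)).2)) →
        r (c k) (c 0) →
        ∀ i ≤ k, ∀ j ≤ k, r (c i) (c j))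
    (hP2 : ∀ p : S × S, ∃! c : S, r p (one, c) ∧ r p (c, one))
    (hP3 : ∀ a b c d e : S, r (a, b) (d, one) → r (b, c) (one, e) → r (d, c) (a, e)) :
    ∃! mul : S → S → S,
      (∀ a b c : S, mul (mul a b) c = mul a (mul b c)) ∧
      (∀ a : S, mul one a = a ∧ mul a one = a) ∧
      (∀ a b c : S, a ≤ b → mul a c ≤ mul b c ∧ mul c a ≤ mul c b) ∧
      (∀ a b c d : S, r (a, b) (c, d) ↔ mul a b = mul c d) := by
  classical
  choose m hm hmu' using fun p : S × S => hP2 p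
  have hm1 : ∀ p : S × S, r p (one, m p) := fun p => (hm p).1
  have hm2 : ∀ p : S × S, r p (m p, one) := fun p => (hm p).2
  have hmu : ∀ (p : S × S) (y : S), r p (one, y) → r p (y, one) → y = m p :=
    fun p y h1 h2 => hmu' p y ⟨h1, h2⟩
  -- uniqueness principle
  have huniq : ∀ (p : S × S) (c : S), r p (one, c) → r p (c, one) → m p = c := by
    intro p c h1 h2
    exact (hmu p c h1 h2).symm
  -- r (1,a) (a,1)
  have hkey : ∀ a : S, r (one, a) (a, one) := by
    intro a
    have hx2 := hm2 (one, a)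
    have hy1 := hm1 (a, one)
    have h3 := hP3 one a one (m (one, a)) (m (a, one)) hx2 hy1
    exact hr.trans (hr.trans hx2 h3) (hr.symm hy1)
  have hid1 : ∀ a : S, m (one, a) = a := fun a =>
    huniq _ a (hr.refl _) (hkey a)
  have hid2 : ∀ a : S, m (a, one) = a := fun a =>
    huniq _ a (hr.symm (hkey a)) (hr.refl _)
  -- level equivalence characterization
  have hiff : ∀ a b c d : S, r (a, b) (c, d) ↔ m (a, b) = m (c, d) := by
    intro a b c d
    constructor
    · intro h
      exact (huniq (c, d) (m (a, b)) (hr.trans (hr.symm h) (hm1 (a, b)))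
        (hr.trans (hr.symm h) (hm2 (a, b)))).symm
    · intro h
      exact hr.trans (hm1 (a, b)) (h ▸ hr.symm (hm1 (c, d)))
  -- associativity
  have hassoc : ∀ a b c : S, m (m (a, b), c) = m (a, m (b, c)) := by
    intro a b c
    have h := hP3 a b c (m (a, b)) (m (b, c)) (hm2 (a, b)) (hm1 (b, c))
    exact (hiff _ _ _ _).1 h
  -- monotonicity
  have hmono1 : ∀ a b c : S, a ≤ b → m (a, c) ≤ m (b, c) := by
    intro a b c hab
    by_contra hlt
    push_neg at hlt
    set u := m (a, c) with hu
    set v := m (b, c) with hv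
    let f : ℕ → S × S := fun i => match i with
      | 0 => (a, c) | 1 => (a, c) | 2 => (b, c) | 3 => (one, v) | _ => (one, u)
    have hsteps : ∀ i < 4, (Even i → r (f i) (f (i + 1))) ∧
        (¬ Even i → (f i).1 ≤ (f (i + 1)).1 ∧ (f i).2 ≤ (f (i + 1)).2) := by
      intro i hi
      interval_cases i
      · exact ⟨fun _ => hr.refl _, fun h => absurd Even.zero h⟩
      · exact ⟨fun h => absurd h (by decide), fun _ => ⟨hab, le_refl _⟩⟩
      · exact ⟨fun _ => hm1 (b, c), fun h => absurd (by decide) h⟩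
      · exact ⟨fun h => absurd h (by decide), fun _ => ⟨le_refl _, hlt.le⟩⟩
    have hclose : r (f 4) (f 0) := hr.symm (hm1 (a, c))
    have := hP1 4 f hsteps hclose 3 (by norm_num) 4 (by norm_num)
    have : v = u := by
      have h := (hiff one v one u).1 this
      rwa [hid1, hid1] at h
    exact absurd this hlt.ne
  have hmono2 : ∀ a b c : S, a ≤ b → m (c, a) ≤ m (c, b) := by
    intro a b c hab
    by_contra hlt
    push_neg at hlt
    set u := m (c, a) with hu
    set v := m (c, b) with hv
    let f : ℕ → S × S := fun i => match i with
      | 0 => (c, a) | 1 => (c, a) | 2 => (c, b) | 3 => (one, v) | _ => (one, u)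
    have hsteps : ∀ i < 4, (Even i → r (f i) (f (i + 1))) ∧
        (¬ Even i → (f i).1 ≤ (f (i + 1)).1 ∧ (f i).2 ≤ (f (i + 1)).2) := by
      intro i hi
      interval_cases i
      · exact ⟨fun _ => hr.refl _, fun h => absurd Even.zero h⟩
      · exact ⟨fun h => absurd h (by decide), fun _ => ⟨le_refl _, hab⟩⟩
      · exact ⟨fun _ => hm1 (c, b), fun h => absurd (by decide) h⟩
      · exact ⟨fun h => absurd h (by decide), fun _ => ⟨le_refl _, hlt.le⟩⟩
    have hclose : r (f 4) (f 0) := hr.symm (hm1 (c, a))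
    have := hP1 4 f hsteps hclose 3 (by norm_num) 4 (by norm_num)
    have : v = u := by
      have h := (hiff one v one u).1 this
      rwa [hid1, hid1] at h
    exact absurd this hlt.ne
  refine ⟨fun a b => m (a, b), ⟨hassoc, fun a => ⟨hid1 a, hid2 a⟩,
    fun a b c hab => ⟨hmono1 a b c hab, hmono2 a b c hab⟩, hiff⟩, ?_⟩
  intro mul' ⟨_, hid', _, hiff'⟩
  funext a b
  have h := (hiff' a b one (m (a, b))).1 (hm1 (a, b))
  rw [h, (hid' (m (a, b))).1]
end

section
/- Let (S; ≤) be a finite chain with at least two elements, top element 1 and bottom element 0, and let ~ be an equivalence on S² satisfying (P1''), (P2), and (P3'): for all a,b,c,d,e ∈ S \ {0,1}, (a,b) ~ (1,d) and (b,c) ~ (1,e) imply (d,c) ~ (a,e). Then ~ satisfies the full conditions (P1), (P2), (P3) of a tomonoid partition, and the associated tomonoid is finite and negative. -/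
/-- On a finite chain with at least two elements, top `1`, bottom
`0`, an equivalence relation satisfying (P1''), (P2), (P3') satisfies the full
conditions (P1), (P3) of a tomonoid partition, and the associated tomonoid is
negative. -/
theorem simplified_axioms_give_tomonoid_partition
    {S : Type*} [Fintype S] [LinearOrder S] (one zero : S)
    (htop : ∀ a : S, a ≤ one) (hbot : ∀ a : S, zero ≤ a) (hne : zero ≠ one)
    (r : S × S → S × S → Prop) (hr : Equivalence r)
    (hP1'' : ∀ a b c d e f : S,
        r (one, e) (a, b) → a ≤ c → b ≤ d → r (c, d) (one, f) → e ≤ f)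
    (hP2 : ∀ p : S × S, ∃! c : S, r p (one, c) ∧ r p (c, one))
    (hP3' : ∀ a b c d e : S,
        a ≠ zero → a ≠ one → b ≠ zero → b ≠ one → c ≠ zero → c ≠ one →
        d ≠ zero → d ≠ one → e ≠ zero → e ≠ one →
        r (a, b) (one, d) → r (b, c) (one, e) → r (d, c) (a, e)) :
    (∀ (k : ℕ) (c : ℕ → S × S),
        (∀ i < k, (Even i → r (c i) (c (i + 1))) ∧
                  (¬ Even i → (c i).1 ≤ (c (i + 1)).1 ∧ (c i).2 ≤ (c (i + 1)).2)) →
        r (c k) (c 0) →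
        ∀ i ≤ k, ∀ j ≤ k, r (c i) (c j)) ∧
    (∀ a b c d e : S, r (a, b) (d, one) → r (b, c) (one, e) → r (d, c) (a, e)) ∧
    (∀ a b c : S, r (a, b) (one, c) → c ≤ a ∧ c ≤ b) := by
  classical
  choose m hm1 hm2 using fun p => (hP2 p).exists
  have huniq : ∀ p : S × S, ∀ c : S, r p (one, c) → r p (c, one) → c = m p := by
    intro p c h1 h2
    exact (hP2 p).unique ⟨h1, h2⟩ ⟨hm1 p, hm2 p⟩
  have hrm : ∀ p q : S × S, r p q → m p = m q := by
    intro p q h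
    exact huniq q (m p) (hr.trans (hr.symm h) (hm1 p)) (hr.trans (hr.symm h) (hm2 p))
  have hmr : ∀ p q : S × S, m p = m q → r p q := by
    intro p q h
    have h2 := hm1 q
    rw [← h] at h2
    exact hr.trans (hm1 p) (hr.symm h2)
  have hle : ∀ p q : S × S, p.1 ≤ q.1 → p.2 ≤ q.2 → m p ≤ m q := by
    intro p q h1 h2
    exact hP1'' p.1 p.2 q.1 q.2 (m p) (m q) (hr.symm (hm1 p)) h1 h2 (hm1 q)
  have hone1 : ∀ a : S, m (one, a) = a := by
    intro a
    refine le_antisymm ?_ ?_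
    · exact hP1'' one a one a (m (one, a)) a (hr.symm (hm1 (one, a))) le_rfl le_rfl (hr.refl _)
    · exact hP1'' one a one a a (m (one, a)) (hr.refl _) le_rfl le_rfl (hm1 (one, a))
  have hone2 : ∀ a : S, m (a, one) = a := by
    intro a
    have h := hm2 (one, a)
    rw [hone1] at h
    exact (huniq (a, one) a (hr.symm h) (hr.refl _)).symm
  have hneg1 : ∀ a b : S, m (a, b) ≤ a := by
    intro a b
    have := hle (a, b) (a, one) le_rfl (htop b)
    rwa [hone2] at this
  have hneg2 : ∀ a b : S, m (a, b) ≤ b := by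
    intro a b
    have := hle (a, b) (one, b) (htop a) le_rfl
    rwa [hone1] at this
  have hz1 : ∀ a : S, m (zero, a) = zero := fun a => le_antisymm (hneg1 _ _) (hbot _)
  have hz2 : ∀ a : S, m (a, zero) = zero := fun a => le_antisymm (hneg2 _ _) (hbot _)
  have hassoc : ∀ a b c : S, m (m (a, b), c) = m (a, m (b, c)) := by
    intro a b c
    rcases eq_or_ne a one with ha1 | ha1
    · subst ha1; rw [hone1, hone1]
    rcases eq_or_ne a zero with ha0 | ha0
    · subst ha0; simp only [hz1, hz2]
    rcases eq_or_ne b one with hb1 | hb1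
    · subst hb1; rw [hone2, hone1]
    rcases eq_or_ne b zero with hb0 | hb0
    · subst hb0; simp only [hz1, hz2]
    rcases eq_or_ne c one with hc1 | hc1
    · subst hc1; rw [hone2, hone2]
    rcases eq_or_ne c zero with hc0 | hc0
    · subst hc0; simp only [hz1, hz2]
    rcases eq_or_ne (m (a, b)) zero with hd0 | hd0
    · rw [hd0, hz1]
      refine (le_antisymm ?_ (hbot _)).symm
      calc m (a, m (b, c)) ≤ m (a, b) := hle _ _ le_rfl (hneg1 b c)
        _ = zero := hd0
    have hd1 : m (a, b) ≠ one := fun h => ha1 (le_antisymm (htop a) (h ▸ hneg1 a b))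
    rcases eq_or_ne (m (b, c)) zero with he0 | he0
    · rw [he0, hz2]
      refine le_antisymm ?_ (hbot _)
      calc m (m (a, b), c) ≤ m (b, c) := hle _ _ (hneg2 a b) le_rfl
        _ = zero := he0
    have he1 : m (b, c) ≠ one := fun h => hb1 (le_antisymm (htop b) (h ▸ hneg1 b c))
    exact hrm _ _ (hP3' a b c (m (a, b)) (m (b, c)) ha0 ha1 hb0 hb1 hc0 hc1 hd0 hd1 he0 he1
      (hmr _ _ (by rw [hone1])) (hmr _ _ (by rw [hone1])))
  refine ⟨?_, ?_, ?_⟩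
  · intro k c hch hclose
    have hstep : ∀ i, i < k → m (c i) ≤ m (c (i + 1)) := by
      intro i hi
      obtain ⟨h1, h2⟩ := hch i hi
      by_cases he : Even i
      · exact (hrm _ _ (h1 he)).le
      · exact hle _ _ (h2 he).1 (h2 he).2
    have hmono : ∀ j, ∀ i, i ≤ j → j ≤ k → m (c i) ≤ m (c j) := by
      intro j
      induction j with
      | zero =>
        intro i hi _
        obtain rfl : i = 0 := Nat.le_zero.mp hi
        exact le_rfl
      | succ n ih =>
        intro i hi hk
        rcases Nat.eq_or_lt_of_le hi with h | h
        · subst h; exact le_rfl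
        · exact le_trans (ih i (Nat.lt_succ_iff.mp h) (by omega)) (hstep n (by omega))
    have h0k : m (c 0) = m (c k) := (hrm _ _ hclose).symm
    have hall : ∀ i, i ≤ k → m (c i) = m (c 0) := by
      intro i hi
      refine le_antisymm ?_ (hmono i 0 (Nat.zero_le _) hi)
      rw [h0k]
      exact hmono k i hi le_rfl
    intro i hi j hj
    exact hmr _ _ ((hall i hi).trans (hall j hj).symm)
  · intro a b c d e h1 h2
    have hd : m (a, b) = d := by
      have := hrm _ _ h1; rwa [hone2] at this
    have he : m (b, c) = e := by
      have := hrm _ _ h2; rwa [hone1] at this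
    apply hmr
    show m (d, c) = m (a, e)
    rw [← hd, ← he, hassoc]
  · intro a b c h
    have hc : m (a, b) = c := by
      have := hrm _ _ h; rwa [hone1] at this
    exact ⟨hc ▸ hneg1 a b, hc ▸ hneg2 a b⟩
end

section
/- A finite negative tomonoid S with bottom element 0 is Archimedean (for all a ≤ b < 1 there exists n ≥ 1 with bⁿ ≤ a) if and only if b*a < a for every a ≠ 0 and b < 1, i.e., if and only if there is no a ∈ S \ {0} and b < 1 with b*a = a. -/
/-- A finite negative tomonoid with bottom `0` is Archimedean
iff there is no `a ≠ 0` and `b < 1` with `b*a = a`, i.e. iff `b*a < a` for all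
`a ≠ 0`, `b < 1`. -/
theorem archimedean_iff_strict_translation
    {S : Type*} [Fintype S] [LinearOrder S] [Monoid S]
    (hcomp : ∀ a b c : S, a ≤ b → a * c ≤ b * c ∧ c * a ≤ c * b)
    (hneg : ∀ a : S, a ≤ 1) (zero : S) (hbot : ∀ a : S, zero ≤ a) :
    (∀ a b : S, a ≤ b → b < 1 → ∃ n : ℕ, 1 ≤ n ∧ b ^ n ≤ a) ↔
    (∀ a b : S, a ≠ zero → b < 1 → b * a < a) := by
  constructor
  · intro harch a b ha hb
    have hle : b * a ≤ a := by
      have := (hcomp b 1 a (hneg b)).1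
      simpa using this
    rcases lt_or_eq_of_le hle with hlt | heq
    · exact hlt
    · exfalso
      obtain ⟨n, hn1, hn⟩ := harch zero b (hbot b) hb
      have hz : b ^ n = zero := le_antisymm hn (hbot _)
      have key : ∀ m : ℕ, b ^ m * a = a := by
        intro m
        induction m with
        | zero => simp
        | succ k ih => rw [pow_succ, mul_assoc, heq, ih]
      have h1 := key n
      rw [hz] at h1
      have h2 : zero * a ≤ zero * 1 := (hcomp a 1 zero (hneg a)).2
      rw [mul_one] at h2
      exact ha (le_antisymm (h1 ▸ h2) (hbot a))
  · intro h a b _hab hb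
    by_cases hz1 : (1 : S) = zero
    · have hb1 := hbot b
      rw [← hz1] at hb1
      exact absurd hb (not_lt.mpr hb1)
    have hanti : ∀ n : ℕ, b ^ n ≠ zero → b ^ (n + 1) < b ^ n := by
      intro n hn
      have := h (b ^ n) b hn hb
      simpa [pow_succ'] using this
    have hex : ∃ n : ℕ, b ^ n = zero := by
      by_contra hcon
      push_neg at hcon
      have hsa : StrictAnti (fun n : ℕ => b ^ n) :=
        strictAnti_nat_of_succ_lt fun n => hanti n (hcon n)
      obtain ⟨x, y, hne, hxy⟩ := Finite.exists_ne_map_eq_of_infinite (fun n : ℕ => b ^ n)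
      exact hne (hsa.injective hxy)
    obtain ⟨n, hn⟩ := hex
    refine ⟨n, ?_, hn ▸ hbot a⟩
    rcases Nat.eq_zero_or_pos n with h0 | h0
    · subst h0; simp at hn; exact absurd hn hz1
    · exact h0
end

section
/- Let (S; ≤, *, 1) be a finite negative tomonoid with at least two elements, bottom element 0 and atom α (the smallest element above 0). Then there exists an idempotent e ≥ α in S such that for all a ∈ S: a*α = 0 if a < e, and a*α = α if a ≥ e. Symmetrically, there exists an idempotent f ≥ α such that α*a = 0 if a < f and α*a = α if a ≥ f. -/
private lemma atom_idem_aux {S : Type*} [Fintype S] [LinearOrder S]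
    (m : S → S → S) (one zero α : S)
    (assoc : ∀ a b c : S, m (m a b) c = m a (m b c))
    (unitl : ∀ a : S, m one a = a) (unitr : ∀ a : S, m a one = a)
    (mono : ∀ a b c : S, a ≤ b → m a c ≤ m b c ∧ m c a ≤ m c b)
    (hneg : ∀ a : S, a ≤ one)
    (hbot : ∀ a : S, zero ≤ a)
    (hatom : zero < α ∧ ∀ b : S, zero < b → α ≤ b) :
    ∃ e : S, α ≤ e ∧ m e e = e ∧
      ∀ a : S, (a < e → m a α = zero) ∧ (e ≤ a → m a α = α) := by
  classical
  set T : Finset S := Finset.univ.filter (fun a => m a α = α) with hT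
  have hone : (1 : ℕ) = 1 := rfl
  have honeT : one ∈ T := by simp [hT, unitl]
  have hTne : T.Nonempty := ⟨one, honeT⟩
  set e := T.min' hTne with he
  have heT : e ∈ T := T.min'_mem hTne
  have heα : m e α = α := by simpa [hT] using heT
  -- dichotomy
  have dich : ∀ a : S, m a α = zero ∨ m a α = α := by
    intro a
    have h1 : m a α ≤ α := by
      have := (mono a one α (hneg a)).1
      simpa [unitl] using this
    rcases lt_or_eq_of_le h1 with h | h
    · left
      by_contra hne
      have hz : zero < m a α := lt_of_le_of_ne (hbot _) (Ne.symm hne)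
      exact absurd (hatom.2 _ hz) (not_le.mpr h)
    · right; exact h
  have hge : ∀ a : S, e ≤ a → m a α = α := by
    intro a ha
    have h1 : α ≤ m a α := by
      have := (mono e a α ha).1
      simpa [heα] using this
    have h2 : m a α ≤ α := by
      have := (mono a one α (hneg a)).1
      simpa [unitl] using this
    exact le_antisymm h2 h1
  have hlt : ∀ a : S, a < e → m a α = zero := by
    intro a ha
    rcases dich a with h | h
    · exact h
    · have : a ∈ T := by simp [hT, h]
      exact absurd (T.min'_le a this) (not_le.mpr ha)
  have hzero : m zero α = zero := by
    have h1 : m zero α ≤ zero := by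
      have := (mono α one zero (hneg α)).2
      simpa [unitr] using this
    exact le_antisymm h1 (hbot _)
  have hze : zero < e := by
    rcases eq_or_lt_of_le (hbot e) with h | h
    · exfalso
      have := heα
      rw [← h, hzero] at this
      exact absurd (this ▸ hatom.1) (lt_irrefl _)
    · exact h
  refine ⟨e, hatom.2 e hze, ?_, fun a => ⟨hlt a, hge a⟩⟩
  have h1 : m e e ≤ e := by
    have := (mono e one e (hneg e)).2
    simpa [unitr] using this
  have h2 : e ≤ m e e := by
    have : m (m e e) α = α := by rw [assoc, heα, heα]
    have hmem : m e e ∈ T := by simp [hT, this]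
    exact T.min'_le _ hmem
  exact le_antisymm h1 h2

/-- In a non-trivial finite negative tomonoid with bottom `0`
and atom `α`, there are idempotents `e, f ≥ α` characterising the right and
left translations by the atom. -/
theorem atom_characterising_idempotents
    {S : Type*} [Fintype S] [LinearOrder S] [Monoid S]
    (hcomp : ∀ a b c : S, a ≤ b → a * c ≤ b * c ∧ c * a ≤ c * b)
    (hneg : ∀ a : S, a ≤ 1)
    (zero α : S) (hbot : ∀ a : S, zero ≤ a)
    (hatom : zero < α ∧ ∀ b : S, zero < b → α ≤ b) :
    (∃ e : S, α ≤ e ∧ e * e = e ∧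
      ∀ a : S, (a < e → a * α = zero) ∧ (e ≤ a → a * α = α)) ∧
    (∃ f : S, α ≤ f ∧ f * f = f ∧
      ∀ a : S, (a < f → α * a = zero) ∧ (f ≤ a → α * a = α)) := by
  constructor
  · exact atom_idem_aux (· * ·) 1 zero α
      (fun a b c => mul_assoc a b c) (fun a => one_mul a) (fun a => mul_one a)
      hcomp hneg hbot hatom
  · exact atom_idem_aux (fun a b => b * a) 1 zero α
      (fun a b c => (mul_assoc c b a).symm) (fun a => mul_one a) (fun a => one_mul a)
      (fun a b c h => ⟨(hcomp a b c h).2, (hcomp a b c h).1⟩)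
      hneg hbot hatom
end

section
/- In a finite negative tomonoid S, the smallest element e such that e*α = α (where α is the atom) is idempotent: e*e = e. -/
/-- In a finite negative tomonoid, the smallest element `e` with
`e * α = α` (where `α` is the atom) is idempotent. -/
theorem smallest_translator_is_idempotent
    {S : Type*} [Fintype S] [LinearOrder S] [Monoid S]
    (hcomp : ∀ a b c : S, a ≤ b → a * c ≤ b * c ∧ c * a ≤ c * b)
    (hneg : ∀ a : S, a ≤ 1)
    (zero α : S) (hbot : ∀ a : S, zero ≤ a)
    (hatom : zero < α ∧ ∀ b : S, zero < b → α ≤ b)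
    (e : S) (he : e * α = α) (hmin : ∀ x : S, x * α = α → e ≤ x) :
    e * e = e := by
  have h1 : e * e ≤ e := by
    have := (hcomp e 1 e (hneg e)).1
    simpa using this
  have h2 : e ≤ e * e := hmin _ (by rw [mul_assoc, he, he])
  exact le_antisymm h1 h2
end

section
/- Every finite negative tomonoid with n ≥ 2 elements arises as the final term of a sequence S₁, …, Sₙ of finite negative tomonoids where S₁ is the trivial (one-element) tomonoid and, for each i, S_i is isomorphic to the Rees quotient of S_{i+1} by its atom. Equivalently: for a finite negative tomonoid T with at least two elements, the Rees quotient of T by its atom is a finite negative tomonoid with exactly one fewer element. -/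
/-- The Rees congruence by `q` as a setoid. -/
def reesSetoid {T : Type*} [LinearOrder T] (q : T) : Setoid T where
  r a b := a = b ∨ (a ≤ q ∧ b ≤ q)
  iseqv := by
    refine ⟨fun a => Or.inl rfl, ?_, ?_⟩
    · rintro a b (rfl | ⟨h1, h2⟩)
      · exact Or.inl rfl
      · exact Or.inr ⟨h2, h1⟩
    · rintro a b c (rfl | ⟨h1, h2⟩) (rfl | ⟨h3, h4⟩)
      · exact Or.inl rfl
      · exact Or.inr ⟨h3, h4⟩
      · exact Or.inr ⟨h1, h2⟩
      · exact Or.inr ⟨h1, h4⟩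

/-- For a finite negative tomonoid `T` with at least two
elements (bottom `0`, atom `α`), the Rees quotient of `T` by its atom is again
a finite negative tomonoid with exactly one fewer element. -/
theorem rees_quotient_by_atom
    {T : Type*} [Fintype T] [LinearOrder T] [Monoid T]
    (hcomp : ∀ a b c : T, a ≤ b → a * c ≤ b * c ∧ c * a ≤ c * b)
    (hneg : ∀ a : T, a ≤ 1)
    (zero α : T) (hbot : ∀ a : T, zero ≤ a)
    (hatom : zero < α ∧ ∀ b : T, zero < b → α ≤ b) :
    ∃ (mul : Quotient (reesSetoid α) → Quotient (reesSetoid α) → Quotient (reesSetoid α))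
      (le : Quotient (reesSetoid α) → Quotient (reesSetoid α) → Prop),
      (∀ a b : T, mul (Quotient.mk (reesSetoid α) a) (Quotient.mk (reesSetoid α) b) =
        Quotient.mk (reesSetoid α) (a * b)) ∧
      IsLinearOrder (Quotient (reesSetoid α)) le ∧
      (∀ a b : T, le (Quotient.mk (reesSetoid α) a) (Quotient.mk (reesSetoid α) b) ↔
        ((a = b ∨ (a ≤ α ∧ b ≤ α)) ∨ a < b)) ∧
      (∀ x y z : Quotient (reesSetoid α),
        le x y → le (mul x z) (mul y z) ∧ le (mul z x) (mul z y)) ∧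
      (∀ x y z : Quotient (reesSetoid α), mul (mul x y) z = mul x (mul y z)) ∧
      (∀ x : Quotient (reesSetoid α),
        mul (Quotient.mk (reesSetoid α) 1) x = x ∧ mul x (Quotient.mk (reesSetoid α) 1) = x) ∧
      (∀ x : Quotient (reesSetoid α), le x (Quotient.mk (reesSetoid α) 1)) ∧
      Nat.card (Quotient (reesSetoid α)) = Nat.card T - 1 := by
  classical
  obtain ⟨hα0, hαmin⟩ := hatom
  have mullea : ∀ a b : T, a * b ≤ a := by
    intro a b
    have h := (hcomp b 1 a (hneg b)).2
    simpa using h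
  have mulleb : ∀ a b : T, a * b ≤ b := by
    intro a b
    have h := (hcomp a 1 b (hneg a)).1
    simpa using h
  -- the relation
  set R : T → T → Prop := fun a b => (a = b ∨ (a ≤ α ∧ b ≤ α)) ∨ a < b with hR
  have Riff : ∀ a b : T, R a b ↔ (a ≤ b ∨ (a ≤ α ∧ b ≤ α)) := by
    intro a b
    simp only [hR]
    constructor
    · rintro ((rfl | h) | h)
      · exact Or.inl le_rfl
      · exact Or.inr h
      · exact Or.inl h.le
    · rintro (h | h)
      · rcases h.lt_or_eq with h | rfl
        · exact Or.inr h
        · exact Or.inl (Or.inl rfl)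
      · exact Or.inl (Or.inr h)
  have Rleft : ∀ a b : T, a ≤ α → R a b := by
    intro a b ha
    rw [Riff]
    by_cases hb : b ≤ α
    · exact Or.inr ⟨ha, hb⟩
    · exact Or.inl (ha.trans (le_of_not_ge hb))
  have Rright : ∀ a b : T, b ≤ α → (R a b ↔ a ≤ α) := by
    intro a b hb
    rw [Riff]
    constructor
    · rintro (h | h)
      · exact h.trans hb
      · exact h.1
    · intro h
      exact Or.inr ⟨h, hb⟩
  have Rwd : ∀ (a b a' b' : T), (reesSetoid α).r a a' → (reesSetoid α).r b b' →
      R a b = R a' b' := by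
    rintro a b a' b' (rfl | ⟨h1, h2⟩) (rfl | ⟨h3, h4⟩)
    · rfl
    · rw [Rright a b h3, Rright a b' h4]
    · apply propext
      constructor
      · intro _; exact Rleft a' b h2
      · intro _; exact Rleft a b h1
    · apply propext
      constructor
      · intro _; exact Rleft a' b' h2
      · intro _; exact Rleft a b h1
  have mulwd : ∀ (a b a' b' : T), (reesSetoid α).r a a' → (reesSetoid α).r b b' →
      (reesSetoid α).r (a * b) (a' * b') := by
    rintro a b a' b' (rfl | ⟨h1, h2⟩) (rfl | ⟨h3, h4⟩)
    · exact Or.inl rfl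
    · exact Or.inr ⟨(mulleb a b).trans h3, (mulleb a b').trans h4⟩
    · exact Or.inr ⟨(mullea a b).trans h1, (mullea a' b).trans h2⟩
    · exact Or.inr ⟨(mullea a b).trans h1, (mullea a' b').trans h2⟩
  refine ⟨Quotient.map₂ (· * ·) (fun a a' ha b b' hb => mulwd a b a' b' ha hb), Quotient.lift₂ R Rwd, ?_, ?_, ?_, ?_, ?_, ?_, ?_, ?_⟩
  · intro a b; rfl
  · refine { refl := ?_, trans := ?_, antisymm := ?_, total := ?_ }
    · intro x
      refine Quotient.inductionOn x ?_
      intro a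
      exact Or.inl (Or.inl rfl)
    · intro x y z
      refine Quotient.inductionOn₃ x y z ?_
      intro a b c hab hbc
      rw [Quotient.lift₂_mk] at *
      rw [Riff] at *
      rcases hab with h | h
      · rcases hbc with h' | h'
        · exact Or.inl (h.trans h')
        · by_cases ha : a ≤ α
          · exact Or.inr ⟨ha, h'.2⟩
          · exact absurd (h.trans h'.1) ha
      · by_cases hc : c ≤ α
        · exact Or.inr ⟨h.1, hc⟩
        · exact Or.inl (h.1.trans (le_of_not_ge hc))
    · intro x y
      refine Quotient.inductionOn₂ x y ?_
      intro a b hab hba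
      rw [Quotient.lift₂_mk] at *
      rw [Riff] at hab hba
      rcases hab with h | h
      · rcases hba with h' | h'
        · exact congrArg _ (le_antisymm h h')
        · exact Quotient.sound (Or.inr ⟨h'.2, h'.1⟩)
      · exact Quotient.sound (Or.inr h)
    · intro x y
      refine Quotient.inductionOn₂ x y ?_
      intro a b
      rw [Quotient.lift₂_mk, Quotient.lift₂_mk, Riff, Riff]
      rcases le_total a b with h | h
      · exact Or.inl (Or.inl h)
      · exact Or.inr (Or.inl h)
  · intro a b; rw [Quotient.lift₂_mk]
  · intro x y z
    refine Quotient.inductionOn₃ x y z ?_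
    intro a b c h
    rw [Quotient.lift₂_mk] at h
    rw [Riff] at h
    show R (a * c) (b * c) ∧ R (c * a) (c * b)
    rcases h with h | h
    · exact ⟨(Riff _ _).2 (Or.inl (hcomp a b c h).1), (Riff _ _).2 (Or.inl (hcomp a b c h).2)⟩
    · exact ⟨(Riff _ _).2 (Or.inr ⟨(mullea a c).trans h.1, (mullea b c).trans h.2⟩),
        (Riff _ _).2 (Or.inr ⟨(mulleb c a).trans h.1, (mulleb c b).trans h.2⟩)⟩
  · intro x y z
    refine Quotient.inductionOn₃ x y z ?_
    intro a b c
    show Quotient.mk _ (a * b * c) = Quotient.mk _ (a * (b * c))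
    rw [mul_assoc]
  · intro x
    refine Quotient.inductionOn x ?_
    intro a
    constructor
    · show Quotient.mk _ (1 * a) = Quotient.mk _ a
      rw [one_mul]
    · show Quotient.mk _ (a * 1) = Quotient.mk _ a
      rw [mul_one]
  · intro x
    refine Quotient.inductionOn x ?_
    intro a
    show R a 1
    exact (Riff _ _).2 (Or.inl (hneg a))
  · have _hαz : α ≠ zero := ne_of_gt hα0
    have e : Quotient (reesSetoid α) ≃ {x : T // x ≠ zero} :=
      { toFun := Quotient.lift (fun a => (⟨max a α, by intro h; rw [← h] at hα0; exact absurd (le_max_right a α) (not_le.2 hα0)⟩ : {x : T // x ≠ zero}))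
          (by
            rintro a b (rfl | ⟨h1, h2⟩)
            · rfl
            · simp [max_eq_right h1, max_eq_right h2])
        invFun := fun x => Quotient.mk _ x.1
        left_inv := by
          intro x
          refine Quotient.inductionOn x ?_
          intro a
          simp only [Quotient.lift_mk]
          by_cases h : a ≤ α
          · rw [max_eq_right h]
            exact Quotient.sound (Or.inr ⟨le_rfl, h⟩)
          · rw [max_eq_left (le_of_not_ge h)]
        right_inv := by
          rintro ⟨x, hx⟩
          have : α ≤ x := hαmin x ((hbot x).lt_of_ne (Ne.symm hx))
          simp [max_eq_left this] }
    rw [Nat.card_congr e, Nat.card_eq_fintype_card, Nat.card_eq_fintype_card]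
    have : Fintype.card {x : T // ¬ (x = zero)} = Fintype.card T - Fintype.card {x : T // x = zero} :=
      Fintype.card_subtype_compl _
    simp only [Fintype.card_subtype_eq] at this
    exact this
end

section
/- Let S be a finite negative tomonoid with at least two elements and T a one-element Rees coextension of S (T = (S\{0}) ∪ {0', α} with Rees quotient by α equal to S). Suppose a, b, c ∈ S\{0}, a*b = 0 in S, b*c = e ≠ 0 in S, and c < f, where f is the smallest element of T with α·f = α in T. Then a·e = 0' in T. -/
/-- condition (E3')(a) of the ramification: In a one-element
Rees coextension `T` of `S` (here phrased inside `T`, whose elements `> α`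
are identified with `S \ {0}`): if `a, b, c, e > α`, the product `a*b` falls
into the class of the bottom of `S` (i.e. `a*b ≤ α`), `b*c = e`, and `c < f`
where `f` is the smallest element with `α*f = α`, then `a*e` is the bottom
element `0'` of `T`. -/
theorem ramification_E3a
    {T : Type*} [Fintype T] [LinearOrder T] [Monoid T]
    (hcomp : ∀ a b c : T, a ≤ b → a * c ≤ b * c ∧ c * a ≤ c * b)
    (hneg : ∀ a : T, a ≤ 1)
    (zero α : T) (hbot : ∀ a : T, zero ≤ a)
    (hatom : zero < α ∧ ∀ b : T, zero < b → α ≤ b)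
    (f : T) (hf : α * f = α) (hfmin : ∀ x : T, α * x = α → f ≤ x)
    (a b c e : T) (ha : α < a) (hb : α < b) (hc : α < c) (he : α < e)
    (hab : a * b ≤ α) (hbc : b * c = e) (hcf : c < f) :
    a * e = zero := by
  have h1 : a * e = (a * b) * c := by rw [← hbc, mul_assoc]
  have h2 : (a * b) * c ≤ α * c := (hcomp _ _ _ hab).1
  have h3 : α * c ≤ α := by
    have := (hcomp c 1 α (hneg c)).2
    rwa [mul_one] at this
  have h4 : α * c ≠ α := fun h => absurd (hfmin c h) (not_le.mpr hcf)
  have h5 : α * c = zero := by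
    by_contra h
    exact h4 (le_antisymm h3 (hatom.2 _ (lt_of_le_of_ne (hbot _) (Ne.symm h))))
  exact le_antisymm (h1 ▸ h2.trans_eq h5) (hbot _)
end
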